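/- There is no sequence (Γ_n)_{n∈ℕ} of maps from the class Ω_td of bounded operators on ℓ²(ℕ) that are tridiagonal with respect to the canonical basis (i.e. ⟨H e_j, e_i⟩ = 0 whenever |i−j| > 1) into the space of nonempty compact subsets of ℂ such that both: (i) each Γ_n has the finite-determination property, i.e. for every A ∈ Ω_td there exists a finite set S ⊆ ℕ×ℕ such that every B ∈ Ω_td whose matrix entries satisfy ⟨B e_j, e_i⟩ = ⟨A e_j, e_i⟩ for all (i,j) ∈ S necessarily satisfies Γ_n(B) = Γ_n(A); and (ii) for every H ∈ Ω_td, the sets Γ_n(H) converge to the spectrum Sp(H) in the Hausdorff metric as n → ∞. -/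

import Mathlib

open scoped InnerProductSpace

/-- The canonical basis vector `e n` of `ℓ²(ℕ)`. -/
noncomputable def eVec (n : ℕ) : lp (fun _ : ℕ => ℂ) 2 := lp.single 2 n 1

/-- The matrix entry `⟨A e_j, e_i⟩` of a bounded operator on `ℓ²(ℕ)`. -/
noncomputable def matEntry
    (A : lp (fun _ : ℕ => ℂ) 2 →L[ℂ] lp (fun _ : ℕ => ℂ) 2) (i j : ℕ) : ℂ :=
  ⟪A (eVec j), eVec i⟫_ℂ

/-- A bounded operator on `ℓ²(ℕ)` is tridiagonal w.r.t. the canonical basis if its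
matrix entries vanish whenever `|i - j| > 1`. -/
def Tridiagonal (H : lp (fun _ : ℕ => ℂ) 2 →L[ℂ] lp (fun _ : ℕ => ℂ) 2) : Prop :=
  ∀ i j : ℕ, 1 < |(i : ℤ) - (j : ℤ)| → matEntry H i j = 0


/-!
Weighted shifts `e_j ↦ w_j e_{j+1}` with weights in `{0, 1}` are tridiagonal. When only finitely
many weights are nonzero the shift is nilpotent, so its spectrum is `{0}`. When the weights
contain, for every `k`, a block of `k` ones followed by a zero, every `μ` with `‖μ‖ < 1` is an
approximate eigenvalue: the vector `(μ^k, …, μ, 1)` placed on such a block `[m, m + k]` is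
mapped by `μ - S` to `μ^(k+1) e_m`.

Index these shifts by the Cantor space `ℕ → Bool`, writing `S_B` for the shift with weights `B`.
Finite determination makes each
`B ↦ Γ n (S_B)` locally constant, so for every `k` the set of `B` with `Γ n (S_B) ⊆ ball 0 (1/4)`
for some `n ≥ k` is open; it is dense because it contains every finitely supported `B`, whose
spectrum is `{0}`. The `B` containing a block of `k` ones followed by a zero also form an open
dense set. By Baire's theorem some `B` lies in all of these sets; then `1/2 ∈ Sp(S_B)` while
`Γ n (S_B) ⊆ ball 0 (1/4)` for infinitely many `n`, contradicting Hausdorff convergence.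
-/

open Filter Topology
open scoped ENNReal

local notation "ℓ²" => lp (fun _ : ℕ => ℂ) 2

local notation "Ω_td" => {H : ℓ² →L[ℂ] ℓ² // Tridiagonal H}

theorem spectrum_subset_zero_of_isNilpotent {𝕜 A : Type*} [Field 𝕜] [Ring A] [Algebra 𝕜 A]
    {a : A} (ha : IsNilpotent a) : spectrum 𝕜 a ⊆ {0} := by
  intro μ hμ
  by_contra hμ0
  refine spectrum.mem_iff.mp hμ ?_
  rw [sub_eq_add_neg]
  exact ha.neg.isUnit_add_left_of_commute ((isUnit_iff_ne_zero.mpr hμ0).map _)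
    (Algebra.commutes μ (-a)).symm

theorem mem_spectrum_of_forall_exists_lt_norm {E : Type*} [NormedAddCommGroup E]
    [NormedSpace ℂ E] {T : E →L[ℂ] E} {μ : ℂ}
    (h : ∀ C : ℝ, ∃ x : E, C * ‖(algebraMap ℂ _ μ - T) x‖ < ‖x‖) :
    μ ∈ spectrum ℂ T := by
  rintro ⟨u, hu⟩
  obtain ⟨x, hx⟩ := h ‖(↑u⁻¹ : E →L[ℂ] E)‖
  have hux : (↑u⁻¹ : E →L[ℂ] E) ((algebraMap ℂ _ μ - T) x) = x := by
    rw [← hu]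
    exact congrArg (fun S : E →L[ℂ] E => S x) u.inv_mul
  have hbound := (↑u⁻¹ : E →L[ℂ] E).le_opNorm ((algebraMap ℂ _ μ - T) x)
  rw [hux] at hbound
  linarith

theorem hausdorffEDist_ne_top_spectrum {A : Type*} [NormedRing A] [NormedAlgebra ℂ A]
    [CompleteSpace A] [Nontrivial A] (K : TopologicalSpace.NonemptyCompacts ℂ) (a : A) :
    Metric.hausdorffEDist (K : Set ℂ) (spectrum ℂ a) ≠ ⊤ :=
  Metric.hausdorffEDist_ne_top_of_nonempty_of_bounded K.nonempty (spectrum.nonempty a)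
    K.isCompact.isBounded (spectrum.isCompact a).isBounded

theorem isLocallyConstant_of_forall_exists_finset {ι Y X : Type*} [TopologicalSpace Y]
    [DiscreteTopology Y] {f : (ι → Y) → X}
    (hf : ∀ B, ∃ T : Finset ι, ∀ B', (∀ j ∈ T, B' j = B j) → f B' = f B) :
    IsLocallyConstant f := by
  refine (IsLocallyConstant.iff_eventually_eq f).2 fun B => ?_
  obtain ⟨T, hT⟩ := hf B
  have hcoord : ∀ j, ∀ᶠ B' in 𝓝 B, B' j = B j := fun j =>
    (continuous_apply j).continuousAt.eventually (isOpen_discrete {B j} |>.mem_nhds rfl)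
  filter_upwards [(T.eventually_all).2 fun j _ => hcoord j] with B' hB' using hT B' hB'

theorem dense_of_forall_exists_eq_of_lt {Y : Type*} [TopologicalSpace Y] {U : Set (ℕ → Y)}
    (hU : ∀ (B : ℕ → Y) M, ∃ B' ∈ U, ∀ j < M, B' j = B j) : Dense U := by
  intro B
  choose B' hB'U hB' using hU B
  refine mem_closure_of_tendsto (b := atTop) (tendsto_pi_nhds.2 fun j => ?_)
    (Eventually.of_forall hB'U)
  exact tendsto_const_nhds.congr' ((eventually_gt_atTop j).mono fun M hM => (hB' M j hM).symm)

theorem eVec_apply (j k : ℕ) : eVec j k = if k = j then 1 else 0 := by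
  simp [eVec, lp.single_apply, Pi.single_apply]

theorem norm_eVec (j : ℕ) : ‖eVec j‖ = 1 := by
  simp [eVec]

instance : Nontrivial ℓ² :=
  ⟨⟨eVec 0, 0, fun h => by simpa [h] using norm_eVec 0⟩⟩

theorem matEntry_eq_conj_apply (A : ℓ² →L[ℂ] ℓ²) (i j : ℕ) :
    matEntry A i j = starRingEnd ℂ (A (eVec j) i) := by
  simp [matEntry, eVec, lp.inner_single_right]

theorem summable_norm_rpow_two (x : ℓ²) : Summable fun j => ‖x j‖ ^ (2 : ℝ) := by
  simpa using (lp.memℓp x).summable (by norm_num)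

noncomputable section WeightedShift

def weightedShiftFun (w x : ℕ → ℂ) : ℕ → ℂ
  | 0 => 0
  | j + 1 => w j * x j

variable {w : ℕ → ℂ}

theorem norm_weightedShiftFun_succ_rpow_le (hw : ∀ j, ‖w j‖ ≤ 1) (x : ℕ → ℂ) (j : ℕ) :
    ‖weightedShiftFun w x (j + 1)‖ ^ (2 : ℝ) ≤ ‖x j‖ ^ (2 : ℝ) := by
  have hle : ‖w j * x j‖ ≤ ‖x j‖ := by
    simpa [norm_mul] using mul_le_of_le_one_left (norm_nonneg (x j)) (hw j)
  exact Real.rpow_le_rpow (norm_nonneg _) hle (by norm_num)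

theorem summable_weightedShiftFun (hw : ∀ j, ‖w j‖ ≤ 1) (x : ℓ²) :
    Summable fun i => ‖weightedShiftFun w x i‖ ^ (2 : ℝ) :=
  (summable_nat_add_iff 1).1 <| (summable_norm_rpow_two x).of_nonneg_of_le
    (fun _ => by positivity) (norm_weightedShiftFun_succ_rpow_le hw x)

def weightedShiftElem (hw : ∀ j, ‖w j‖ ≤ 1) (x : ℓ²) : ℓ² :=
  ⟨weightedShiftFun w x,
    (memℓp_gen_iff (by norm_num)).2 (by simpa using summable_weightedShiftFun hw x)⟩

theorem norm_weightedShiftElem_le (hw : ∀ j, ‖w j‖ ≤ 1) (x : ℓ²) :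
    ‖weightedShiftElem hw x‖ ≤ ‖x‖ := by
  refine lp.norm_le_of_tsum_le (by norm_num) (norm_nonneg x) ?_
  calc ∑' i, ‖weightedShiftFun w x i‖ ^ (2 : ℝ≥0∞).toReal
      = ∑' j, ‖weightedShiftFun w x (j + 1)‖ ^ (2 : ℝ) := by
        simpa [weightedShiftFun] using (summable_weightedShiftFun hw x).tsum_eq_zero_add
    _ ≤ ∑' j, ‖x j‖ ^ (2 : ℝ) :=
        ((summable_nat_add_iff 1).2 (summable_weightedShiftFun hw x)).tsum_mono
          (summable_norm_rpow_two x) (norm_weightedShiftFun_succ_rpow_le hw x)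
    _ = ‖x‖ ^ (2 : ℝ≥0∞).toReal := by simpa using (lp.norm_rpow_eq_tsum (by norm_num) x).symm

def weightedShift (hw : ∀ j, ‖w j‖ ≤ 1) : ℓ² →L[ℂ] ℓ² :=
  LinearMap.mkContinuous
    { toFun := weightedShiftElem hw
      map_add' := fun x y => by
        ext (_ | j)
        exacts [(add_zero 0).symm, mul_add (w j) (x j) (y j)]
      map_smul' := fun c x => by
        ext (_ | j)
        exacts [(mul_zero c).symm, mul_left_comm (w j) c (x j)] }
    1 (fun x => by simpa using norm_weightedShiftElem_le hw x)

variable (hw : ∀ j, ‖w j‖ ≤ 1)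

@[simp]
theorem weightedShift_apply_zero (x : ℓ²) : weightedShift hw x 0 = 0 := rfl

@[simp]
theorem weightedShift_apply_succ (x : ℓ²) (j : ℕ) : weightedShift hw x (j + 1) = w j * x j := rfl

theorem matEntry_weightedShift (i j : ℕ) :
    matEntry (weightedShift hw) i j = if i = j + 1 then starRingEnd ℂ (w j) else 0 := by
  rw [matEntry_eq_conj_apply]
  rcases i with _ | i
  · simp
  · by_cases h : i = j <;> simp [eVec_apply, h]

theorem tridiagonal_weightedShift : Tridiagonal (weightedShift hw) := by
  intro i j hij
  rw [matEntry_weightedShift, if_neg]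
  rcases lt_abs.mp hij with h | h <;> omega

theorem weightedShift_pow_apply_of_lt (x : ℓ²) {k i : ℕ} (hi : i < k) :
    (weightedShift hw ^ k) x i = 0 := by
  induction k generalizing i with
  | zero => omega
  | succ k ih =>
    rw [pow_succ', mul_apply_eq_comp]
    rcases i with _ | i
    · rfl
    · exact mul_eq_zero_of_right _ (ih (by omega))

theorem weightedShift_apply_of_lt {N : ℕ} (hN : ∀ j, N ≤ j → w j = 0) (x : ℓ²) {i : ℕ}
    (hi : N < i) : weightedShift hw x i = 0 := by
  obtain ⟨j, rfl⟩ := Nat.exists_eq_add_of_lt hi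
  simp [hN (N + j) (by omega)]

theorem isNilpotent_weightedShift {N : ℕ} (hN : ∀ j, N ≤ j → w j = 0) :
    IsNilpotent (weightedShift hw) := by
  refine ⟨N + 1, ContinuousLinearMap.ext fun x => lp.ext (funext fun i => ?_)⟩
  rcases lt_or_ge N i with hi | hi
  · rw [pow_succ', mul_apply_eq_comp]
    exact weightedShift_apply_of_lt hw hN _ hi
  · exact weightedShift_pow_apply_of_lt hw x (by omega)

theorem spectrum_weightedShift_of_eventually_zero {N : ℕ} (hN : ∀ j, N ≤ j → w j = 0) :
    spectrum ℂ (weightedShift hw) = {0} :=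
  (spectrum.nonempty _).subset_singleton_iff.1
    (spectrum_subset_zero_of_isNilpotent (isNilpotent_weightedShift hw hN))

def blockFun (μ : ℂ) (m k i : ℕ) : ℂ := if m ≤ i ∧ i ≤ m + k then μ ^ (m + k - i) else 0

theorem memℓp_blockFun (μ : ℂ) (m k : ℕ) : Memℓp (blockFun μ m k) 2 := by
  refine (memℓp_zero ((Set.finite_Iic (m + k)).subset fun i hi => ?_)).of_exponent_ge bot_le
  by_contra h
  exact hi (if_neg (by simp only [Set.mem_Iic] at h; omega))

def blockVector (μ : ℂ) (m k : ℕ) : ℓ² := ⟨blockFun μ m k, memℓp_blockFun μ m k⟩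

@[simp]
theorem blockVector_apply (μ : ℂ) (m k i : ℕ) : blockVector μ m k i = blockFun μ m k i := rfl

theorem one_le_norm_blockVector (μ : ℂ) (m k : ℕ) : 1 ≤ ‖blockVector μ m k‖ := by
  simpa [blockVector, blockFun] using lp.norm_apply_le_norm two_ne_zero (blockVector μ m k) (m + k)

theorem sub_weightedShift_blockVector {μ : ℂ} {m k : ℕ} (hone : ∀ i < k, w (m + i) = 1)
    (hzero : w (m + k) = 0) :
    (algebraMap ℂ (ℓ² →L[ℂ] ℓ²) μ - weightedShift hw) (blockVector μ m k)
      = μ ^ (k + 1) • eVec m := by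
  ext i
  change μ * blockFun μ m k i - weightedShift hw (blockVector μ m k) i = μ ^ (k + 1) * eVec m i
  simp only [eVec_apply, mul_ite, mul_one, mul_zero]
  rcases i with _ | i
  · rcases Nat.eq_zero_or_pos m with rfl | hm
    · simp [blockFun, pow_succ']
    · simp [blockFun, hm.ne, hm.ne']
  simp only [weightedShift_apply_succ, blockVector_apply]
  rcases lt_or_ge (i + 1) m with h | h
  · simp [blockFun, show ¬ m ≤ i + 1 by omega, show ¬ m ≤ i by omega, show i + 1 ≠ m by omega]
  rcases h.eq_or_lt with rfl | h
  · simp [blockFun, pow_succ']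
  rcases lt_or_ge i (m + k) with h' | h'
  · obtain ⟨t, rfl⟩ : ∃ t, i = m + t := ⟨i - m, by omega⟩
    rw [hone t (by omega), blockFun, blockFun, if_pos (by omega), if_pos (by omega),
      if_neg (by omega), show m + k - (m + t) = m + k - (m + t + 1) + 1 by omega, pow_succ']
    ring
  rcases h'.eq_or_lt with rfl | h'
  · simp [blockFun, hzero, show m + k + 1 ≠ m by omega]
  · simp [blockFun, show ¬ i + 1 ≤ m + k by omega, show ¬ i ≤ m + k by omega,
      show i + 1 ≠ m by omega]

theorem mem_spectrum_weightedShift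
    (hblocks : ∀ k, ∃ m, (∀ i < k, w (m + i) = 1) ∧ w (m + k) = 0) {μ : ℂ} (hμ : ‖μ‖ < 1) :
    μ ∈ spectrum ℂ (weightedShift hw) := by
  refine mem_spectrum_of_forall_exists_lt_norm fun C => ?_
  have hsmall : ∀ᶠ n in atTop, C * ‖μ‖ ^ n < 1 :=
    ((tendsto_pow_atTop_nhds_zero_of_lt_one (norm_nonneg μ) hμ).const_mul C).eventually
      (gt_mem_nhds (by simp))
  obtain ⟨k, hk⟩ := eventually_atTop.1 hsmall
  obtain ⟨m, hone, hzero⟩ := hblocks k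
  refine ⟨blockVector μ m k, ?_⟩
  rw [sub_weightedShift_blockVector hw hone hzero, norm_smul, norm_eVec, mul_one, norm_pow]
  exact (hk (k + 1) k.le_succ).trans_le (one_le_norm_blockVector μ m k)

end WeightedShift

def FinitelyDetermined {X : Type*} (f : Ω_td → X) : Prop :=
  ∀ A, ∃ S : Finset (ℕ × ℕ), ∀ B : Ω_td,
    (∀ p ∈ S, matEntry B.1 p.1 p.2 = matEntry A.1 p.1 p.2) → f B = f A

section BooleanWeights

def boolWeight (B : ℕ → Bool) (j : ℕ) : ℂ := if B j then 1 else 0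

theorem norm_boolWeight_le (B : ℕ → Bool) (j : ℕ) : ‖boolWeight B j‖ ≤ 1 := by
  unfold boolWeight
  split <;> simp

noncomputable def boolShift (B : ℕ → Bool) : Ω_td :=
  ⟨weightedShift (norm_boolWeight_le B), tridiagonal_weightedShift _⟩

theorem FinitelyDetermined.isLocallyConstant_comp_boolShift {X : Type*} {f : Ω_td → X}
    (hf : FinitelyDetermined f) : IsLocallyConstant (f ∘ boolShift) := by
  refine isLocallyConstant_of_forall_exists_finset fun B => ?_
  obtain ⟨S, hS⟩ := hf (boolShift B)
  refine ⟨S.image Prod.snd, fun B' hB' => hS _ fun p hp => ?_⟩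
  simp only [boolShift, matEntry_weightedShift, boolWeight,
    hB' p.2 (Finset.mem_image_of_mem _ hp)]

theorem spectrum_boolShift_of_eventually_false {B : ℕ → Bool} {N : ℕ}
    (hB : ∀ j, N ≤ j → B j = false) : spectrum ℂ (boolShift B).1 = {0} :=
  spectrum_weightedShift_of_eventually_zero (N := N) _ fun j hj => by simp [boolWeight, hB j hj]

def longBlocks (k : ℕ) : Set (ℕ → Bool) :=
  ⋃ m, {B | (fun i : Fin (k + 1) => B (m + i)) = fun i : Fin (k + 1) => decide ((i : ℕ) < k)}

theorem isOpen_longBlocks (k : ℕ) : IsOpen (longBlocks k) := by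
  refine isOpen_iUnion fun m => ?_
  have hwindow : Continuous fun B : ℕ → Bool => fun i : Fin (k + 1) => B (m + i) :=
    continuous_pi fun i => continuous_apply _
  exact hwindow.isOpen_preimage _ (isOpen_discrete {fun i : Fin (k + 1) => decide ((i : ℕ) < k)})

theorem dense_longBlocks (k : ℕ) : Dense (longBlocks k) := by
  refine dense_of_forall_exists_eq_of_lt fun B M =>
    ⟨fun j => if j < M then B j else j < M + k, Set.mem_iUnion.2 ⟨M, ?_⟩, fun j hj => if_pos hj⟩
  ext i
  simp

theorem mem_spectrum_boolShift {B : ℕ → Bool} (hB : ∀ k, B ∈ longBlocks k) {μ : ℂ}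
    (hμ : ‖μ‖ < 1) : μ ∈ spectrum ℂ (boolShift B).1 := by
  refine mem_spectrum_weightedShift _ (fun k => ?_) hμ
  obtain ⟨m, hm⟩ := Set.mem_iUnion.1 (hB k)
  refine ⟨m, fun i hi => ?_, ?_⟩
  · simpa [boolWeight, hi] using congrFun hm (⟨i, by omega⟩ : Fin (k + 1))
  · simpa [boolWeight] using congrFun hm (Fin.last k)

end BooleanWeights

section Approximation

variable (Γ : ℕ → Ω_td → TopologicalSpace.NonemptyCompacts ℂ)

def approxInBall (r : ℝ) (k : ℕ) : Set (ℕ → Bool) :=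
  ⋃ n ≥ k, (fun B => Γ n (boolShift B)) ⁻¹' {K | (K : Set ℂ) ⊆ Metric.ball 0 r}

theorem isOpen_approxInBall (hdet : ∀ n, FinitelyDetermined (Γ n)) (r : ℝ) (k : ℕ) :
    IsOpen (approxInBall Γ r k) :=
  isOpen_biUnion fun n _ => (hdet n).isLocallyConstant_comp_boolShift _

theorem dense_approxInBall
    (hconv : ∀ H : Ω_td,
      Tendsto (fun n => Metric.hausdorffDist (Γ n H : Set ℂ) (spectrum ℂ H.1)) atTop (𝓝 0))
    {r : ℝ} (hr : 0 < r) (k : ℕ) : Dense (approxInBall Γ r k) := by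
  refine dense_of_forall_exists_eq_of_lt fun B M =>
    ⟨fun j => decide (j < M) && B j, ?_, fun j hj => by simp [hj]⟩
  set B' : ℕ → Bool := fun j => decide (j < M) && B j
  have hspec : spectrum ℂ (boolShift B').1 = {0} :=
    spectrum_boolShift_of_eventually_false (N := M) fun j hj => by simp [B', not_lt.2 hj]
  obtain ⟨n, hn, hclose⟩ := ((eventually_ge_atTop k).and
    ((hconv (boolShift B')).eventually (gt_mem_nhds hr))).exists
  refine Set.mem_iUnion₂.2 ⟨n, hn, fun z hz => ?_⟩
  obtain ⟨y, hy, hzy⟩ := Metric.exists_dist_lt_of_hausdorffDist_lt hz hclose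
    (hausdorffEDist_ne_top_spectrum _ _)
  rw [hspec, Set.mem_singleton_iff] at hy
  rwa [hy] at hzy

end Approximation

/-- There is no sequence of finitely-determined maps from the bounded tridiagonal
operators on `ℓ²(ℕ)` to the nonempty compact subsets of `ℂ` converging, in Hausdorff
distance, to the spectrum on every input. -/
theorem stmt1 :
    ¬ ∃ Γ : ℕ → {H : lp (fun _ : ℕ => ℂ) 2 →L[ℂ] lp (fun _ : ℕ => ℂ) 2 // Tridiagonal H} →
        TopologicalSpace.NonemptyCompacts ℂ,
      (∀ (n : ℕ) (A : {H : lp (fun _ : ℕ => ℂ) 2 →L[ℂ] lp (fun _ : ℕ => ℂ) 2 // Tridiagonal H}),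
        ∃ S : Finset (ℕ × ℕ),
          ∀ B : {H : lp (fun _ : ℕ => ℂ) 2 →L[ℂ] lp (fun _ : ℕ => ℂ) 2 // Tridiagonal H},
            (∀ p ∈ S, matEntry B.1 p.1 p.2 = matEntry A.1 p.1 p.2) → Γ n B = Γ n A) ∧
      (∀ H : {H : lp (fun _ : ℕ => ℂ) 2 →L[ℂ] lp (fun _ : ℕ => ℂ) 2 // Tridiagonal H},
        Filter.Tendsto (fun n => Metric.hausdorffDist (Γ n H : Set ℂ) (spectrum ℂ H.1))
          Filter.atTop (nhds 0)) := by
  rintro ⟨Γ, hdet, hconv⟩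
  have hopen k : IsOpen (approxInBall Γ (1 / 4) k) := isOpen_approxInBall Γ hdet _ k
  have hdense : Dense (⋂ k, approxInBall Γ (1 / 4) k ∩ longBlocks k) :=
    dense_iInter_of_isOpen (fun k => (hopen k).inter (isOpen_longBlocks k)) fun k =>
      (dense_approxInBall Γ hconv (by norm_num) k).inter_of_isOpen_left (dense_longBlocks k)
        (hopen k)
  obtain ⟨B, hB⟩ := hdense.nonempty
  rw [Set.mem_iInter] at hB
  have hhalf : (1 / 2 : ℂ) ∈ spectrum ℂ (boolShift B).1 :=
    mem_spectrum_boolShift (fun k => (hB k).2) (by norm_num)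
  obtain ⟨N, hN⟩ := eventually_atTop.1
    ((hconv (boolShift B)).eventually (gt_mem_nhds (by norm_num : (0 : ℝ) < 1 / 4)))
  obtain ⟨n, hn, hball⟩ := Set.mem_iUnion₂.1 (hB N).1
  obtain ⟨z, hz, hdist⟩ := Metric.exists_dist_lt_of_hausdorffDist_lt' hhalf (hN n hn)
    (hausdorffEDist_ne_top_spectrum _ _)
  have hz0 : ‖z‖ < 1 / 4 := mem_ball_zero_iff.1 (hball hz)
  have htri := dist_triangle_left (1 / 2 : ℂ) 0 z
  norm_num at htri
  linarith
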